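/- Let K > 0 and b be real numbers with b ∉ {0, 1/3, 1/2, 1}, set m := (1−3b)/(1−2b), and let u : ℝ → ℝ be four times differentiable on an open interval J with u'''(x) ≥ 0 for all x ∈ J. Then u satisfies u⁗(x) = (u'''(x))^m for all x ∈ J if and only if the function v defined by v(t) := K^(3/b)·u(t/K²) satisfies v⁗(t) = K·(v'''(t))^m for all t with t/K² ∈ J. -/

import Mathlib

/-!
Since `deriv` of `t ↦ f (t / c)` is `t ↦ c⁻¹ • f' (t / c)` unconditionally (junk value `0` on
both sides where `f` is not differentiable), `v⁽ⁿ⁾ t = K^(3/b - 2n) u⁽ⁿ⁾ (t / K²)` for every `t`.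
The equations then correspond because the exponents match: `3/b - 8 = 1 + (3/b - 6) m`.
-/

theorem iterate_deriv_smul_comp_div {𝕜 E : Type*} [NontriviallyNormedField 𝕜]
    [NormedAddCommGroup E] [NormedSpace 𝕜 E] (A c : 𝕜) (f : 𝕜 → E) (n : ℕ) :
    deriv^[n] (fun t => A • f (t / c)) = fun t => (A / c ^ n) • deriv^[n] f (t / c) := by
  induction n generalizing A with
  | zero => simp
  | succ n ih =>
    funext t
    have hcomp : deriv (fun t => deriv^[n] f (t / c)) t = c⁻¹ • deriv^[n + 1] f (t / c) := by
      simp only [div_eq_inv_mul]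
      rw [Function.iterate_succ_apply']
      exact deriv_comp_mul_left c⁻¹ (deriv^[n] f) t
    rw [Function.iterate_succ_apply', ih, deriv_fun_const_smul_field, hcomp, smul_smul, pow_succ,
      div_mul_eq_div_div, div_eq_mul_inv (A / c ^ n)]

theorem iterate_deriv_rpow_mul_comp_div_sq {K : ℝ} (hK : 0 < K) (p : ℝ) (f : ℝ → ℝ) (n : ℕ)
    (t : ℝ) :
    deriv^[n] (fun t => K ^ p * f (t / K ^ 2)) t =
      K ^ (p - (2 * n : ℕ)) * deriv^[n] f (t / K ^ 2) := by
  rw [Real.rpow_sub_natCast hK.ne', pow_mul]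
  exact congrFun (iterate_deriv_smul_comp_div (K ^ p) (K ^ 2) f n) t

theorem rpow_one_add_mul_mul_eq_iff {K : ℝ} (hK : 0 < K) {w : ℝ} (hw : 0 ≤ w) (s m y : ℝ) :
    K ^ (1 + s * m) * y = K * (K ^ s * w) ^ m ↔ y = w ^ m := by
  have hscale : K * (K ^ s * w) ^ m = K ^ (1 + s * m) * w ^ m := by
    rw [Real.mul_rpow (Real.rpow_nonneg hK.le s) hw, ← Real.rpow_mul hK.le, Real.rpow_add hK,
      Real.rpow_one, mul_assoc]
  rw [hscale, mul_right_inj' (Real.rpow_pos_of_pos hK _).ne']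

theorem three_div_sub_eight_eq {b : ℝ} (hb0 : b ≠ 0) (hb12 : b ≠ 1 / 2) :
    3 / b - 8 = 1 + (3 / b - 6) * ((1 - 3 * b) / (1 - 2 * b)) := by
  have h2b : 1 - 2 * b ≠ 0 := by
    intro h; apply hb12; linarith
  have hfactor : 3 / b - 6 = 3 / b * (1 - 2 * b) := by field_simp; ring
  rw [hfactor, mul_assoc, mul_div_cancel₀ _ h2b]
  field_simp
  ring

theorem stmt_4 (K b : ℝ) (hK : 0 < K) (hb0 : b ≠ 0)
    (hb12 : b ≠ 1 / 2)
    (m : ℝ) (hm : m = (1 - 3 * b) / (1 - 2 * b)) (u : ℝ → ℝ) (J : Set ℝ)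
    (hpos : ∀ x ∈ J, 0 ≤ deriv^[3] u x)
    (v : ℝ → ℝ) (hv : ∀ t, v t = K ^ ((3 : ℝ) / b) * u (t / K ^ 2)) :
    (∀ x ∈ J, deriv^[4] u x = (deriv^[3] u x) ^ m) ↔
      (∀ t : ℝ, t / K ^ 2 ∈ J → deriv^[4] v t = K * (deriv^[3] v t) ^ m) := by
  obtain rfl : v = fun t => K ^ ((3 : ℝ) / b) * u (t / K ^ 2) := funext hv
  have hsurj : Function.Surjective fun t : ℝ => t / K ^ 2 :=
    fun x => ⟨x * K ^ 2, mul_div_cancel_right₀ x (by positivity)⟩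
  rw [hsurj.forall]
  refine forall_congr' fun t => imp_congr_right fun ht => ?_
  simp only [iterate_deriv_rpow_mul_comp_div_sq hK]
  push_cast
  rw [hm, three_div_sub_eight_eq hb0 hb12]
  exact (rpow_one_add_mul_mul_eq_iff hK (hpos _ ht) _ _ _).symm
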